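/- arXiv:math-ph/0605006 — 3 statements merged into one kernel-verified Lean document; each statement's English description precedes it below -/
import Mathlib

section
/- Let N ≥ 1, let ψ : ℂ → ℝ, and let P = {P₁,…,P_N} be any complete set of monic polynomials. Then, assuming absolute integrability, ∫_{ℂ^N} |Δ(γ)|² · ∏_{n=1}^N ψ(γ_n) e^{−|γ_n|²/2} dλ_{2N}(γ) = N! · det W_P, where W_P is the N×N matrix with entries W_P[j,k] = ⟨P_j | P_k⟩. -/
open MeasureTheory Finset

noncomputable section

/-- The Vandermonde product `Δ(γ) = ∏_{m<n} (γ_n - γ_m)`. -/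
def vand {K : ℕ} (γ : Fin K → ℂ) : ℂ := ∏ m : Fin K, ∏ n ∈ Finset.Ioi m, (γ n - γ m)

/-- The inner product `⟨P|Q⟩ = ∫_ℂ e^{−|γ|²/2} ψ(γ) conj(P(γ)) Q(γ) dλ₂(γ)`. -/
def innerGin (ψ : ℂ → ℝ) (P Q : Polynomial ℂ) : ℂ :=
  ∫ γ : ℂ, ((Real.exp (-(‖γ‖)^2/2) : ℝ) : ℂ) * ((ψ γ : ℝ) : ℂ) *
    (starRingEnd ℂ) (P.eval γ) * Q.eval γ

/-- The GinUE eigenvalue integrand `|Δ(γ)|² ∏_n ψ(γ_n) e^{−|γ_n|²/2}` on `ℂ^N`. -/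
def ginueIntegrand (ψ : ℂ → ℝ) {N : ℕ} (γ : Fin N → ℂ) : ℂ :=
  ((‖vand γ‖ : ℝ) : ℂ)^2 *
    ∏ n : Fin N, ((ψ (γ n) : ℝ) : ℂ) * ((Real.exp (-(‖γ n‖)^2/2) : ℝ) : ℂ)

end

/-!
Andréief's identity: writing `|Δ(γ)|² = conj(det[P_j(γ_i)]) · det[P_j(γ_i)]` and absorbing the
weight `ψ(γ_i) e^{-|γ_i|²/2}` into the rows of the first determinant, the integrand is a product
of two determinants whose rows depend on one variable each. Expanding both determinants over
permutations `σ, τ`, Fubini factors every term into `∏_j ⟨P_{σ j} | P_{τ j}⟩`, and the double sum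
`∑_{σ,τ} sign σ sign τ ∏_j W (σ j) (τ j)` collapses to `N! · det W`.
-/

open MeasureTheory Finset Matrix Equiv Polynomial

namespace Matrix

variable {n R : Type*} [Fintype n] [DecidableEq n] [CommRing R]

theorem sum_sign_mul_det_submatrix (W : Matrix n n R) :
    ∑ σ : Perm n, (Perm.sign σ : R) * det (W.submatrix σ id) =
      (Fintype.card n).factorial * det W := by
  simp_rw [det_permute, ← mul_assoc, ← Int.cast_mul, ← Units.val_mul, Int.units_mul_self,
    Units.val_one, Int.cast_one, one_mul, sum_const, card_univ, Fintype.card_perm, nsmul_eq_mul]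

theorem sum_sign_mul_sign_mul_prod_eq_factorial_mul_det (W : Matrix n n R) :
    ∑ σ : Perm n, ∑ τ : Perm n, (Perm.sign σ : R) * Perm.sign τ * ∏ j, W (σ j) (τ j) =
      (Fintype.card n).factorial * det W := by
  rw [← sum_sign_mul_det_submatrix]
  refine sum_congr rfl fun σ _ => ?_
  rw [← det_transpose, det_apply', mul_sum]
  simp only [mul_assoc, transpose_apply, submatrix_apply, id]

end Matrix

section Andreief

variable {𝕜 α n : Type*} [RCLike 𝕜] [Fintype n] [DecidableEq n]

theorem det_mul_det_eq_sum_sign_mul_sign_mul_prod (f g : n → α → 𝕜) (x : n → α) :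
    det (of fun i j => f j (x i)) * det (of fun i j => g j (x i)) =
      ∑ σ : Perm n, ∑ τ : Perm n,
        (Perm.sign σ : 𝕜) * Perm.sign τ * ∏ j, f (σ j) (x j) * g (τ j) (x j) := by
  rw [← det_transpose, ← det_transpose (of fun i j => g j (x i)), det_apply', det_apply',
    sum_mul_sum]
  refine sum_congr rfl fun σ _ => sum_congr rfl fun τ _ => ?_
  rw [prod_mul_distrib]
  simp only [transpose_apply, of_apply]
  ring

theorem integral_det_mul_det [MeasurableSpace α] (μ : Measure α) [SigmaFinite μ]
    (f g : n → α → 𝕜) (hfg : ∀ i j, Integrable (fun x => f i x * g j x) μ) :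
    ∫ x : n → α, det (of fun i j => f j (x i)) * det (of fun i j => g j (x i))
        ∂(Measure.pi fun _ => μ) =
      (Fintype.card n).factorial * det (of fun i j => ∫ x, f i x * g j x ∂μ) := by
  have hterm : ∀ σ τ : Perm n, Integrable (fun x : n → α =>
      (Perm.sign σ : 𝕜) * Perm.sign τ * ∏ j, f (σ j) (x j) * g (τ j) (x j))
      (Measure.pi fun _ => μ) := fun σ τ =>
    (Integrable.fintype_prod fun j => hfg (σ j) (τ j)).const_mul _
  simp_rw [det_mul_det_eq_sum_sign_mul_sign_mul_prod]
  rw [integral_finsetSum _ fun σ _ => integrable_finsetSum _ fun τ _ => hterm σ τ,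
    ← sum_sign_mul_sign_mul_prod_eq_factorial_mul_det]
  refine sum_congr rfl fun σ _ => ?_
  rw [integral_finsetSum _ fun τ _ => hterm σ τ]
  refine sum_congr rfl fun τ _ => ?_
  rw [integral_const_mul, integral_fintype_prod_eq_prod (fun j x => f (σ j) x * g (τ j) x)]
  rfl

end Andreief

noncomputable def ginWeight (ψ : ℂ → ℝ) (z : ℂ) : ℂ :=
  ((Real.exp (-(‖z‖)^2/2) : ℝ) : ℂ) * ((ψ z : ℝ) : ℂ)

theorem vand_eq_det_eval {N : ℕ} (γ : Fin N → ℂ) (p : Fin N → ℂ[X])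
    (hdeg : ∀ i, (p i).natDegree = i) (hmonic : ∀ i, (p i).Monic) :
    vand γ = det (of fun i j => (p j).eval (γ i)) := by
  rw [← det_eval_matrixOfPolynomials_eq_det_vandermonde γ p hdeg hmonic, det_vandermonde, vand]

theorem ginueIntegrand_eq_det_mul_det (ψ : ℂ → ℝ) {N : ℕ} (p : Fin N → ℂ[X])
    (hdeg : ∀ i, (p i).natDegree = i) (hmonic : ∀ i, (p i).Monic) (γ : Fin N → ℂ) :
    ginueIntegrand ψ γ =
      det (of fun i j => ginWeight ψ (γ i) * starRingEnd ℂ ((p j).eval (γ i))) *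
        det (of fun i j => (p j).eval (γ i)) := by
  have hrow : det (of fun i j => ginWeight ψ (γ i) * starRingEnd ℂ ((p j).eval (γ i))) =
      (∏ i, ginWeight ψ (γ i)) * det ((starRingEnd ℂ).mapMatrix (of fun i j => (p j).eval (γ i))) :=
    det_mul_column _ _
  rw [hrow, ← RingHom.map_det, ginueIntegrand, vand_eq_det_eval γ p hdeg hmonic,
    ← Complex.conj_mul']
  simp only [ginWeight, mul_comm ((ψ _ : ℝ) : ℂ)]
  ring

theorem ginue_average_eq_det_general (N : ℕ) (ψ : ℂ → ℝ)
    (P : ℕ → Polynomial ℂ)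
    (hP : ∀ n < N, (P n).Monic ∧ (P n).natDegree = n)
    (hIntW : ∀ p < N, ∀ q < N, Integrable (fun γ : ℂ =>
      ((Real.exp (-(‖γ‖)^2/2) : ℝ) : ℂ) * ((ψ γ : ℝ) : ℂ) *
        (starRingEnd ℂ) ((P p).eval γ) * (P q).eval γ)) :
    (∫ γ : Fin N → ℂ, ginueIntegrand ψ γ)
      = (Nat.factorial N : ℂ) *
        Matrix.det (Matrix.of fun j k : Fin N => innerGin ψ (P (j:ℕ)) (P (k:ℕ))) := by
  have hdeg (i : Fin N) : (P i).natDegree = i := (hP i i.2).2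
  have hmonic (i : Fin N) : (P i).Monic := (hP i i.2).1
  simp_rw [ginueIntegrand_eq_det_mul_det ψ (fun i : Fin N => P i) hdeg hmonic]
  have h := integral_det_mul_det volume
    (fun (i : Fin N) z => ginWeight ψ z * starRingEnd ℂ ((P i).eval z))
    (fun (j : Fin N) z => (P j).eval z) fun i j => hIntW i i.2 j j.2
  rw [Fintype.card_fin] at h
  exact h

/-- **Theorem 2 (Sinclair).**  For any complete set of monic polynomials `P`
(`P n` monic of degree `n`), the unnormalized GinUE ensemble average
`∫_{ℂ^N} |Δ(γ)|² ∏_n ψ(γ_n)e^{−|γ_n|²/2} dλ_{2N}(γ)` equals `N! · det W_P`,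
where `W_P[j,k] = ⟨P_j|P_k⟩`, assuming absolute integrability. -/
theorem ginue_average_eq_det (N : ℕ) (hN : 1 ≤ N) (ψ : ℂ → ℝ)
    (P : ℕ → Polynomial ℂ)
    (hP : ∀ n < N, (P n).Monic ∧ (P n).natDegree = n)
    (hInt : Integrable (fun γ : Fin N → ℂ => ginueIntegrand ψ γ))
    (hIntW : ∀ p < N, ∀ q < N, Integrable (fun γ : ℂ =>
      ((Real.exp (-(‖γ‖)^2/2) : ℝ) : ℂ) * ((ψ γ : ℝ) : ℂ) *
        (starRingEnd ℂ) ((P p).eval γ) * (P q).eval γ)) :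
    (∫ γ : Fin N → ℂ, ginueIntegrand ψ γ)
      = (Nat.factorial N : ℂ) *
        Matrix.det (Matrix.of fun j k : Fin N => innerGin ψ (P (j:ℕ)) (P (k:ℕ))) :=
  ginue_average_eq_det_general N ψ P hP hIntW
end

section
/- Let L+2M = N, let α ∈ ℝ^L, β ∈ (ℂ∖ℝ)^M, set γ = (β̄₁,β₁,…,β̄_M,β_M,α₁,…,α_L), and let P = {P₁,…,P_N} be a complete set of monic polynomials. Let W^{α,β} be the N×N matrix with entries W^{α,β}[j,k] := P_k(γ_j). Then |Δ(α,β)| = Σ_{t∈I_{2M}^N} sgn(t) · { det W^β_{i,t} · (−i)^M ∏_{m=1}^M sgn(Im β_m) } · { det W^α_{i',t'} · ∏_{j<k} sgn(α_k − α_j) }, where i ∈ I_{2M}^N is the identity map, the minor W^β_{i,t} (taken from the first 2M rows) depends only on β, and the minor W^α_{i',t'} (taken from the last L rows) depends only on α. -/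
open Finset

noncomputable section

/-- The permutation `ι_t` of `{0,…,N-1}` induced by an increasing function
`t : Fin K → Fin N` (encoded by its image, the `K`-element set `s`): it equals `t` on the
first `K` indices, and the increasing enumeration `t'` of the complement on the rest. -/
def shuffle {N K : ℕ} (s : Finset (Fin N)) (hs : s.card = K) : Equiv.Perm (Fin N) :=
  Equiv.ofBijective
    (fun n => if h : (n:ℕ) < K then s.orderEmbOfFin hs ⟨(n:ℕ), h⟩
      else sᶜ.orderEmbOfFin (by rw [Finset.card_compl, Fintype.card_fin, hs])
        ⟨(n:ℕ) - K, by have := n.isLt; omega⟩)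
    (by
      refine Finite.injective_iff_bijective.mp ?_
      intro a b hab
      by_cases ha : (a:ℕ) < K <;> by_cases hb : (b:ℕ) < K
      · simp only [dif_pos ha, dif_pos hb] at hab
        have := (s.orderEmbOfFin hs).injective hab
        have hv : (a:ℕ) = (b:ℕ) := by simpa using this
        exact Fin.ext hv
      · simp only [dif_pos ha, dif_neg hb] at hab
        have h1 : s.orderEmbOfFin hs ⟨(a:ℕ), ha⟩ ∈ s := Finset.orderEmbOfFin_mem s hs _
        have h2 := Finset.orderEmbOfFin_mem sᶜ
          (by rw [Finset.card_compl, Fintype.card_fin, hs])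
          ⟨(b:ℕ) - K, by have := b.isLt; omega⟩
        rw [hab] at h1
        exact absurd h1 (Finset.mem_compl.mp h2)
      · simp only [dif_neg ha, dif_pos hb] at hab
        have h1 : s.orderEmbOfFin hs ⟨(b:ℕ), hb⟩ ∈ s := Finset.orderEmbOfFin_mem s hs _
        have h2 := Finset.orderEmbOfFin_mem sᶜ
          (by rw [Finset.card_compl, Fintype.card_fin, hs])
          ⟨(a:ℕ) - K, by have := a.isLt; omega⟩
        rw [← hab] at h1
        exact absurd h1 (Finset.mem_compl.mp h2)
      · simp only [dif_neg ha, dif_neg hb] at hab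
        have := (sᶜ.orderEmbOfFin
          (by rw [Finset.card_compl, Fintype.card_fin, hs])).injective hab
        have hv : (a:ℕ) - K = (b:ℕ) - K := by simpa using this
        exact Fin.ext (by omega))

end

open MeasureTheory Finset

noncomputable section

/-- The vector `γ = (β̄₁, β₁, …, β̄_M, β_M, α₁, …, α_L)`. -/
def gammaVec {L M : ℕ} (α : Fin L → ℝ) (β : Fin M → ℂ) : Fin (2*M + L) → ℂ :=
  fun j => if h : (j:ℕ) < 2*M then
      (if (j:ℕ) % 2 = 0 then (starRingEnd ℂ) (β ⟨(j:ℕ)/2, by omega⟩) else β ⟨(j:ℕ)/2, by omega⟩)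
    else ((α ⟨(j:ℕ) - 2*M, by have := j.isLt; omega⟩ : ℝ) : ℂ)

/-!
`det W = Δ(γ)`, since monic polynomials of degree `k - 1` reduce `W` to the Vandermonde matrix
by column operations. The generalized Laplace expansion along the first `2M` rows then writes
`det W` as the signed sum of products of complementary minors: every permutation of `Fin N`
factors uniquely as `ι_t ∘ (π ⊕ ρ)`, where `t` enumerates the image of the first `2M` indices.

It remains to see that `Δ(γ) (-i)^M ∏ sgn(Im β_m) ∏ sgn(α_k - α_j)` is `|Δ(γ)|`. Peeling off
the pair `β̄₁, β₁` splits off from `Δ` the factor `(β₁ - β̄₁) · conj X · X` with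
`X = ∏_r (γ_r - β₁)`, because the remaining entries `γ_r` are closed under conjugation; moreover
`(β₁ - β̄₁) (-i) sgn(Im β₁) = 2 |Im β₁|`. Once all pairs are gone,
`Δ(α) ∏ sgn(α_k - α_j) = ∏ |α_k - α_j|`.
-/

open Equiv

section Laplace

variable {R : Type*} [CommRing R] {K L : ℕ}

theorem card_compl_eq_of_card_eq {N : ℕ} (h : K + L = N) {s : Finset (Fin N)}
    (hs : s.card = K) : sᶜ.card = L := by
  rw [card_compl, Fintype.card_fin, hs]; omega

theorem shuffle_castAdd (s : Finset (Fin (K + L))) (hs : s.card = K) (j : Fin K) :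
    shuffle s hs (Fin.castAdd L j) = s.orderEmbOfFin hs j := by
  simp [shuffle]

theorem shuffle_natAdd (s : Finset (Fin (K + L))) (hs : s.card = K) (j : Fin L) :
    shuffle s hs (Fin.natAdd K j) = sᶜ.orderEmbOfFin (card_compl_eq_of_card_eq rfl hs) j := by
  simp [shuffle]

variable (K L) in
abbrev ShuffleData :=
  {s : Finset (Fin (K + L)) // s ∈ powersetCard K univ} × Perm (Fin K) × Perm (Fin L)

def shuffleBlock (x : ShuffleData K L) : Perm (Fin (K + L)) :=
  shuffle x.1.1 (mem_powersetCard.mp x.1.2).2 * finSumFinEquiv.permCongr (x.2.1.sumCongr x.2.2)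

theorem shuffleBlock_castAdd (x : ShuffleData K L) (j : Fin K) :
    shuffleBlock x (Fin.castAdd L j) =
      x.1.1.orderEmbOfFin (mem_powersetCard.mp x.1.2).2 (x.2.1 j) := by
  simp [shuffleBlock, permCongr_apply, shuffle_castAdd]

theorem shuffleBlock_natAdd (x : ShuffleData K L) (j : Fin L) :
    shuffleBlock x (Fin.natAdd K j) =
      x.1.1ᶜ.orderEmbOfFin (card_compl_eq_of_card_eq rfl (mem_powersetCard.mp x.1.2).2)
        (x.2.2 j) := by
  simp [shuffleBlock, permCongr_apply, shuffle_natAdd]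

theorem sign_shuffleBlock (x : ShuffleData K L) :
    Perm.sign (shuffleBlock x) =
      Perm.sign (shuffle x.1.1 (mem_powersetCard.mp x.1.2).2) *
        (Perm.sign x.2.1 * Perm.sign x.2.2) := by
  rw [shuffleBlock, Perm.sign_mul, Perm.sign_permCongr, Perm.sign_sumCongr]

theorem image_shuffleBlock_castAdd (x : ShuffleData K L) :
    univ.image (fun j => shuffleBlock x (Fin.castAdd L j)) = x.1.1 := by
  simp only [shuffleBlock_castAdd]
  rw [← Function.comp_def, ← image_image, image_univ_equiv, image_orderEmbOfFin_univ]

theorem shuffleBlock_injective : Function.Injective (shuffleBlock (K := K) (L := L)) := by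
  rintro ⟨s, π, ρ⟩ ⟨s', π', ρ'⟩ hx
  obtain rfl : s = s' := Subtype.ext <| by
    rw [← image_shuffleBlock_castAdd (s, π, ρ), ← image_shuffleBlock_castAdd (s', π', ρ'), hx]
  have hblock := (finSumFinEquiv.permCongr).injective (mul_left_cancel hx)
  obtain ⟨rfl, rfl⟩ := Prod.ext_iff.mp (Perm.sumCongrHom_injective hblock)
  rfl

theorem shuffleBlock_bijective : Function.Bijective (shuffleBlock (K := K) (L := L)) := by
  refine (Fintype.bijective_iff_injective_and_card _).mpr ⟨shuffleBlock_injective, ?_⟩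
  simp only [Fintype.card_prod, Fintype.card_perm, Fintype.card_coe, card_powersetCard,
    card_univ, Fintype.card_fin]
  rw [← Nat.choose_mul_factorial_mul_factorial (Nat.le_add_right K L), Nat.add_sub_cancel_left,
    mul_assoc]

theorem det_eq_sum_sign_mul_prod (A : Matrix (Fin K) (Fin K) R) :
    A.det = ∑ σ : Perm (Fin K), (Perm.sign σ : R) * ∏ i, A i (σ i) := by
  rw [← Matrix.det_transpose, Matrix.det_apply']
  rfl

theorem det_eq_sum_sign_shuffle_mul_det_mul_det {N : ℕ} (h : K + L = N)
    (A : Matrix (Fin N) (Fin N) R) :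
    A.det = ∑ s ∈ (powersetCard K (univ : Finset (Fin N))).attach,
      (Perm.sign (shuffle s.1 (mem_powersetCard.mp s.2).2) : R) *
        ((A.submatrix (fun j => Fin.cast h (Fin.castAdd L j))
            (s.1.orderEmbOfFin (mem_powersetCard.mp s.2).2)).det *
          (A.submatrix (fun j => Fin.cast h (Fin.natAdd K j))
            (s.1ᶜ.orderEmbOfFin
              (card_compl_eq_of_card_eq h (mem_powersetCard.mp s.2).2))).det) := by
  subst h
  rw [det_eq_sum_sign_mul_prod,
    ← Fintype.sum_bijective _ shuffleBlock_bijective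
      (fun x => (Perm.sign (shuffleBlock x) : R) * ∏ i, A i (shuffleBlock x i)) _ fun _ => rfl,
    ← univ_eq_attach, Fintype.sum_prod_type]
  refine sum_congr rfl fun s _ => ?_
  rw [Fintype.sum_prod_type, det_eq_sum_sign_mul_prod, det_eq_sum_sign_mul_prod, sum_mul_sum,
    mul_sum]
  refine Fintype.sum_congr _ _ fun σ => ?_
  rw [mul_sum]
  refine Fintype.sum_congr _ _ fun τ => ?_
  rw [sign_shuffleBlock, ← Fin.prod_congr' _ rfl, Fin.prod_univ_add]
  simp only [shuffleBlock_castAdd, shuffleBlock_natAdd, Matrix.submatrix_apply, Fin.cast_eq_self]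
  push_cast
  ring

end Laplace

section Vandermonde

open Complex ComplexConjugate

theorem vand_comp_cast {m n : ℕ} (h : m = n) (v : Fin n → ℂ) :
    vand (fun i => v (Fin.cast h i)) = vand v := by
  subst h; rfl

theorem vand_cons {n : ℕ} (a : ℂ) (v : Fin n → ℂ) :
    vand (Fin.cons a v : Fin (n + 1) → ℂ) = (∏ j, (v j - a)) * vand v := by
  simp [vand, Fin.prod_univ_succ, Fin.prod_Ioi_succ]

theorem self_mul_sign_eq_abs (x : ℝ) : x * Real.sign x = |x| := by
  rcases lt_trichotomy x 0 with hx | rfl | hx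
  · rw [Real.sign_of_neg hx, abs_of_neg hx, mul_neg_one]
  · simp
  · rw [Real.sign_of_pos hx, abs_of_pos hx, mul_one]

theorem ofReal_norm_vand_ofReal {n : ℕ} (x : Fin n → ℝ) :
    ((‖vand (fun i => (x i : ℂ))‖ : ℝ) : ℂ) =
      vand (fun i => (x i : ℂ)) * ∏ j, ∏ k ∈ Ioi j, ((Real.sign (x k - x j) : ℝ) : ℂ) := by
  have hreal : vand (fun i => (x i : ℂ)) = ((∏ j, ∏ k ∈ Ioi j, (x k - x j) : ℝ) : ℂ) := by
    simp [vand]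
  rw [hreal, norm_real, Real.norm_eq_abs, abs_prod]
  simp_rw [abs_prod, ← self_mul_sign_eq_abs, prod_mul_distrib]
  push_cast
  rfl

theorem ofReal_norm_sub_conj (z : ℂ) :
    ((‖z - conj z‖ : ℝ) : ℂ) = (z - conj z) * (-I * ((Real.sign z.im : ℝ) : ℂ)) := by
  rw [sub_conj, norm_mul, norm_I, mul_one, norm_real, Real.norm_eq_abs, abs_mul, abs_two,
    ← self_mul_sign_eq_abs]
  push_cast
  linear_combination (2 * (z.im : ℂ) * (Real.sign z.im : ℂ)) * I_sq

variable {L M : ℕ} (α : Fin L → ℝ)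

theorem gammaVec_natAdd (β : Fin M → ℂ) (j : Fin L) :
    gammaVec α β (Fin.natAdd (2 * M) j) = α j := by
  simp [gammaVec]

theorem gammaVec_of_fin_zero (β : Fin 0 → ℂ) :
    gammaVec α β = fun j => (α (Fin.cast (by omega) j) : ℂ) := by
  funext j
  simp only [gammaVec]
  rw [dif_neg (by omega)]
  rfl

theorem gammaVec_succ (β : Fin (M + 1) → ℂ) :
    gammaVec α β = fun j =>
      (Fin.cons (conj (β 0)) (Fin.cons (β 0) (gammaVec α (Fin.tail β))) :
        Fin (2 * M + L + 1 + 1) → ℂ) (Fin.cast (by omega) j) := by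
  funext ⟨j, hj⟩
  rcases j with _ | _ | j
  · show gammaVec α β ⟨0, hj⟩ = conj (β 0)
    simp only [gammaVec]
    rw [dif_pos (by omega)]
    rfl
  · show gammaVec α β ⟨1, hj⟩ = β 0
    simp only [gammaVec]
    rw [dif_pos (by omega)]
    rfl
  · show gammaVec α β ⟨j + 2, hj⟩ = gammaVec α (Fin.tail β) ⟨j, by omega⟩
    simp only [gammaVec, Fin.tail]
    by_cases h : j < 2 * M
    · have hdiv : (j + 1 + 1) / 2 = j / 2 + 1 := by omega
      have hmod : (j + 1 + 1) % 2 = j % 2 := by omega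
      simp only [dif_pos h, dif_pos (show j + 1 + 1 < 2 * (M + 1) by omega), hdiv, hmod]
      rfl
    · simp only [dif_neg h, dif_neg (show ¬j + 1 + 1 < 2 * (M + 1) by omega)]
      congr 3
      omega

theorem prod_gammaVec_succ {G : Type*} [CommMonoid G] (β : Fin (M + 1) → ℂ) (g : ℂ → G) :
    ∏ j, g (gammaVec α β j) =
      g (conj (β 0)) * (g (β 0) * ∏ j, g (gammaVec α (Fin.tail β) j)) := by
  let v : Fin (2 * M + L + 1 + 1) → ℂ :=
    Fin.cons (conj (β 0)) (Fin.cons (β 0) (gammaVec α (Fin.tail β)))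
  simp only [gammaVec_succ]
  rw [Fin.prod_congr' (fun i => g (v i)) (by omega), Fin.prod_univ_succ, Fin.prod_univ_succ]
  rfl

theorem prod_comp_conj_gammaVec (β : Fin M → ℂ) (f : ℂ → ℂ) :
    ∏ j, f (conj (gammaVec α β j)) = ∏ j, f (gammaVec α β j) := by
  induction M with
  | zero => simp [gammaVec_of_fin_zero, conj_ofReal]
  | succ M ih =>
    rw [prod_gammaVec_succ α β (fun z => f (conj z)), prod_gammaVec_succ, ih, conj_conj,
      mul_left_comm]

theorem prod_gammaVec_sub_conj (β : Fin M → ℂ) (z : ℂ) :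
    ∏ j, (gammaVec α β j - conj z) = conj (∏ j, (gammaVec α β j - z)) := by
  rw [map_prod, ← prod_comp_conj_gammaVec α β (· - conj z)]
  simp_rw [map_sub]

theorem ofReal_norm_vand_gammaVec (β : Fin M → ℂ) :
    ((‖vand (gammaVec α β)‖ : ℝ) : ℂ) = vand (gammaVec α β) *
      ((-I) ^ M * ∏ m, ((Real.sign (β m).im : ℝ) : ℂ)) *
      ∏ j, ∏ k ∈ Ioi j, ((Real.sign (α k - α j) : ℝ) : ℂ) := by
  induction M with
  | zero =>
    rw [gammaVec_of_fin_zero, vand_comp_cast _ (fun i => (α i : ℂ)), ofReal_norm_vand_ofReal]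
    simp
  | succ M ih =>
    set w := gammaVec α (Fin.tail β)
    set X := ∏ j, (w j - β 0)
    have hvand : vand (gammaVec α β) = (β 0 - conj (β 0)) * (conj X * X) * vand w := by
      rw [gammaVec_succ, vand_comp_cast, vand_cons, vand_cons, Fin.prod_univ_succ]
      simp only [Fin.cons_zero, Fin.cons_succ]
      rw [prod_gammaVec_sub_conj]
      ring
    have hX : ((‖conj X * X‖ : ℝ) : ℂ) = conj X * X := by
      rw [conj_mul']
      norm_cast
      rw [norm_pow, norm_norm]
    rw [hvand, norm_mul, norm_mul, ofReal_mul, ofReal_mul, ofReal_norm_sub_conj, hX, ih,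
      Fin.prod_univ_succ, pow_succ]
    simp only [Fin.tail]
    ring

end Vandermonde

/-- **Lemma 1 (Sinclair).**  Laplace expansion of `|Δ(α,β)|`: with
`W^{α,β}[j,k] = P_k(γ_j)`, summing over elements `t` of `I_{2M}^N` (encoded by their
images, the `2M`-element subsets `s` of `{0,…,N−1}`, with `t = s.orderEmbOfFin` and
`t' = sᶜ.orderEmbOfFin`),
`|Δ(α,β)| = Σ_t sgn(t) {det W^β_{i,t} (−i)^M ∏_m sgn(Im β_m)}{det W^α_{i',t'} ∏_{j<k} sgn(α_k−α_j)}`. -/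
theorem abs_vandermonde_laplace_expansion (N L M : ℕ) (h : L + 2*M = N)
    (α : Fin L → ℝ) (β : Fin M → ℂ)
    (P : ℕ → Polynomial ℂ)
    (hP : ∀ n < N, (P n).Monic ∧ (P n).natDegree = n) :
    ((‖vand (gammaVec α β)‖ : ℝ) : ℂ)
      = ∑ s ∈ (Finset.powersetCard (2*M) (Finset.univ : Finset (Fin N))).attach,
          ((Equiv.Perm.sign
              (shuffle s.1 ((Finset.mem_powersetCard.mp s.2).2)) : ℤ) : ℂ) *
          ((Matrix.det (Matrix.of fun j k : Fin (2*M) =>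
              (P ((s.1.orderEmbOfFin ((Finset.mem_powersetCard.mp s.2).2) k : Fin N) : ℕ)).eval
                (gammaVec α β ⟨(j:ℕ), by have := j.isLt; omega⟩))) *
            (-Complex.I)^M * ∏ m : Fin M, ((Real.sign ((β m).im) : ℝ) : ℂ)) *
          ((Matrix.det (Matrix.of fun j k : Fin L =>
              (P (((s.1)ᶜ.orderEmbOfFin
                  (by rw [Finset.card_compl, Fintype.card_fin,
                        (Finset.mem_powersetCard.mp s.2).2]; omega) k : Fin N) : ℕ)).eval
                ((α j : ℝ) : ℂ))) *
            ∏ j : Fin L, ∏ k ∈ Finset.Ioi j, ((Real.sign (α k - α j) : ℝ) : ℂ)) := by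
  have hN : 2 * M + L = N := by omega
  set W : Matrix (Fin N) (Fin N) ℂ :=
    Matrix.of fun j k => (P k).eval (gammaVec α β (Fin.cast hN.symm j)) with hW
  have hdet : W.det = vand (gammaVec α β) := by
    rw [hW, ← Matrix.det_eval_matrixOfPolynomials_eq_det_vandermonde _ (fun k : Fin N => P k)
      (fun k => (hP k k.isLt).2) (fun k => (hP k k.isLt).1), Matrix.det_vandermonde]
    exact vand_comp_cast hN.symm (gammaVec α β)
  rw [ofReal_norm_vand_gammaVec, ← hdet, det_eq_sum_sign_shuffle_mul_det_mul_det hN, sum_mul,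
    sum_mul]
  refine sum_congr rfl fun s _ => ?_
  simp only [hW, Matrix.submatrix, Matrix.of_apply, Fin.cast_cast, Fin.cast_eq_self,
    gammaVec_natAdd]
  -- `ring!` unfolds `Fin.castAdd L j` to the row index `⟨j, _⟩` of the statement
  ring!

end
end

section
/- Let L+2M = N, let α ∈ ℝ^L and β ∈ (ℂ∖ℝ)^M. Then |Δ(α,β)| = (−i)^M · { ∏_{j<k} sgn(α_k − α_j) · ∏_{m=1}^M sgn(Im β_m) } · Δ(α,β). Equivalently, Δ(α,β) = { ∏_{j<k} (α_k − α_j) } · ∏_{ℓ=1}^L ∏_{m=1}^M |β_m − α_ℓ|² · { ∏_{m<n} |β_n − β_m|² |β_n − β̄_m|² } · ∏_{m=1}^M 2i·Im(β_m). -/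
/-!
The vector `γ` is the block of conjugate pairs `(β̄_m, β_m)` followed by the reals `α_ℓ`, so
`Δ(γ)` factors blockwise: the real Vandermonde `∏ (α_k - α_j)`; the pair–real cross terms
`(α - β̄)(α - β) = |β - α|²`; the pair–pair cross terms, which group into
`|β_n - β_m|² |β_n - β̄_m|²`; and the in-pair factors `β_m - β̄_m = 2i Im β_m`.
Apart from `∏ (α_k - α_j)` and `∏ 2i Im β_m` every factor is a nonnegative real, and the phases
of those two are undone by `|x| = sgn x · x` and `2|y| = (-i) sgn y · 2iy`.
-/

open Finset

noncomputable section

lemma vand_comp_cast_s9 {K K' : ℕ} (h : K' = K) (γ : Fin K → ℂ) :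
    vand (γ ∘ Fin.cast h) = vand γ := by
  subst h; rfl

lemma vand_cons_s9 {K : ℕ} (x : ℂ) (γ : Fin K → ℂ) :
    vand (Fin.cons x γ) = (∏ i, (γ i - x)) * vand γ := by
  simp only [vand, Fin.prod_univ_succ, Fin.prod_Ioi_zero, Fin.prod_Ioi_succ, Fin.cons_zero,
    Fin.cons_succ]

lemma vand_append {m n : ℕ} (u : Fin m → ℂ) (v : Fin n → ℂ) :
    vand (Fin.append u v) = vand u * (∏ i, ∏ j, (v j - u i)) * vand v := by
  induction m with
  | zero =>
    rw [Fin.append_left_nil u v rfl, vand_comp_cast_s9]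
    simp [vand]
  | succ m ih =>
    rw [← Fin.cons_self_tail u, Fin.append_cons, vand_comp_cast_s9, vand_cons_s9, vand_cons_s9,
      ih, Fin.prod_univ_add, Fin.prod_univ_succ]
    simp only [Fin.append_left, Fin.append_right, Fin.cons_zero, Fin.cons_succ]
    ring

def conjPairs {M : ℕ} (β : Fin M → ℂ) : Fin (2*M) → ℂ :=
  fun j => if (j:ℕ) % 2 = 0 then (starRingEnd ℂ) (β ⟨(j:ℕ)/2, by omega⟩)
    else β ⟨(j:ℕ)/2, by omega⟩

lemma gammaVec_eq_append {L M : ℕ} (α : Fin L → ℝ) (β : Fin M → ℂ) :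
    gammaVec α β = Fin.append (conjPairs β) (fun ℓ => (α ℓ : ℂ)) := by
  funext j
  refine Fin.addCases (fun i => ?_) (fun ℓ => ?_) j
  · simp [gammaVec, conjPairs]
  · simp [gammaVec]

lemma conjPairs_succ {M : ℕ} (β : Fin (M+1) → ℂ) :
    conjPairs β ∘ Fin.cast (by ring) =
      Fin.cons ((starRingEnd ℂ) (β 0)) (Fin.cons (β 0) (conjPairs (Fin.tail β))) := by
  funext j
  refine Fin.cases ?_ (fun j => Fin.cases ?_ (fun i => ?_) j) j
  · simp [conjPairs]
  · have h1 : 1 % (2 * (M + 1)) = 1 := Nat.mod_eq_of_lt (by omega)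
    simp [conjPairs, h1]
  · simp only [conjPairs, Function.comp_apply, Fin.cons_succ, Fin.tail, Fin.val_cast,
      Fin.val_succ]
    have h2 : ((i:ℕ) + 1 + 1) % 2 = (i:ℕ) % 2 := by omega
    have h3 : ((i:ℕ) + 1 + 1) / 2 = (i:ℕ) / 2 + 1 := by omega
    simp only [h2, h3]
    rfl

lemma prod_conjPairs {R : Type*} [CommMonoid R] {M : ℕ} (β : Fin M → ℂ) (f : ℂ → R) :
    ∏ j, f (conjPairs β j) = ∏ m, f ((starRingEnd ℂ) (β m)) * f (β m) := by
  induction M with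
  | zero => simp
  | succ M ih =>
    rw [← Fin.prod_congr' _ (by ring : 2*M+1+1 = 2*(M+1))]
    have hsucc := congrFun (conjPairs_succ β)
    simp only [Function.comp_apply] at hsucc
    simp only [hsucc, Fin.prod_univ_succ, Fin.cons_zero, Fin.cons_succ, ih, Fin.tail, mul_assoc]

lemma conj_pair_sub_conj_pair (b c : ℂ) :
    ((starRingEnd ℂ) c - (starRingEnd ℂ) b) * ((starRingEnd ℂ) c - b) *
        ((c - (starRingEnd ℂ) b) * (c - b)) =
      ((‖c - b‖ : ℝ) : ℂ) ^ 2 * ((‖c - (starRingEnd ℂ) b‖ : ℝ) : ℂ) ^ 2 := by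
  rw [← Complex.conj_mul', ← Complex.conj_mul']
  simp only [map_sub, Complex.conj_conj]
  ring

lemma ofReal_sub_conj_pair (a : ℝ) (b : ℂ) :
    ((a : ℂ) - (starRingEnd ℂ) b) * ((a : ℂ) - b) = ((‖b - a‖ : ℝ) : ℂ) ^ 2 := by
  rw [norm_sub_rev, ← Complex.conj_mul']
  simp only [map_sub, Complex.conj_ofReal]

lemma sub_conj_eq_two_mul_I_mul_im (b : ℂ) : b - (starRingEnd ℂ) b = 2 * Complex.I * b.im := by
  rw [Complex.sub_conj]; push_cast; ring

lemma vand_conjPairs {M : ℕ} (β : Fin M → ℂ) :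
    vand (conjPairs β) =
      (∏ m, ∏ n ∈ Ioi m, ((‖β n - β m‖ : ℝ) : ℂ) ^ 2 *
          ((‖β n - (starRingEnd ℂ) (β m)‖ : ℝ) : ℂ) ^ 2) *
        ∏ m, (2 * Complex.I * (((β m).im : ℝ) : ℂ)) := by
  induction M with
  | zero => simp [vand]
  | succ M ih =>
    have hcross := prod_conjPairs (Fin.tail β)
      (fun z => (z - (starRingEnd ℂ) (β 0)) * (z - β 0))
    simp only [conj_pair_sub_conj_pair, Fin.tail] at hcross
    rw [← vand_comp_cast_s9 (by ring : 2*M+1+1 = 2*(M+1)), conjPairs_succ, vand_cons_s9, vand_cons_s9,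
      Fin.prod_univ_succ, Fin.cons_zero, ih]
    simp only [Fin.cons_succ, ← sub_conj_eq_two_mul_I_mul_im]
    rw [Fin.prod_univ_succ, Fin.prod_univ_succ, Fin.prod_Ioi_zero]
    simp only [Fin.prod_Ioi_succ, Fin.tail]
    rw [← hcross, prod_mul_distrib]
    ring

lemma prod_prod_ofReal_sub_conjPairs {L M : ℕ} (α : Fin L → ℝ) (β : Fin M → ℂ) :
    ∏ i, ∏ ℓ, ((α ℓ : ℂ) - conjPairs β i) = ∏ ℓ, ∏ m, ((‖β m - α ℓ‖ : ℝ) : ℂ) ^ 2 := by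
  rw [prod_conjPairs β (fun z => ∏ ℓ, ((α ℓ : ℂ) - z)), prod_comm]
  simp only [← prod_mul_distrib, ofReal_sub_conj_pair]

lemma vand_ofReal {L : ℕ} (α : Fin L → ℝ) :
    vand (fun ℓ => (α ℓ : ℂ)) = ∏ j, ∏ k ∈ Ioi j, ((α k - α j : ℝ) : ℂ) := by
  simp [vand]

lemma vand_gammaVec {L M : ℕ} (α : Fin L → ℝ) (β : Fin M → ℂ) :
    vand (gammaVec α β)
      = (∏ j, ∏ k ∈ Ioi j, ((α k - α j : ℝ) : ℂ)) *
        (∏ ℓ, ∏ m, ((‖β m - α ℓ‖ : ℝ) : ℂ) ^ 2) *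
        (∏ m, ∏ n ∈ Ioi m, ((‖β n - β m‖ : ℝ) : ℂ) ^ 2 *
            ((‖β n - (starRingEnd ℂ) (β m)‖ : ℝ) : ℂ) ^ 2) *
        ∏ m, (2 * Complex.I * (((β m).im : ℝ) : ℂ)) := by
  rw [gammaVec_eq_append, vand_append, vand_conjPairs, prod_prod_ofReal_sub_conjPairs,
    vand_ofReal]
  ring

lemma ofReal_abs_eq_sign_mul (x : ℝ) : ((|x| : ℝ) : ℂ) = Real.sign x * x := by
  rcases lt_trichotomy x 0 with hx | rfl | hx
  · simp [abs_of_neg hx, Real.sign_of_neg hx]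
  · simp
  · simp [abs_of_pos hx, Real.sign_of_pos hx]

lemma two_mul_ofReal_abs (x : ℝ) :
    2 * ((|x| : ℝ) : ℂ) = -Complex.I * Real.sign x * (2 * Complex.I * x) := by
  rw [ofReal_abs_eq_sign_mul]
  linear_combination (2 * Real.sign x * x : ℂ) * Complex.I_sq

theorem abs_vandermonde_eq_general (L M : ℕ)
    (α : Fin L → ℝ) (β : Fin M → ℂ) :
    (((‖vand (gammaVec α β)‖ : ℝ) : ℂ)
        = (-Complex.I)^M *
          ((∏ j : Fin L, ∏ k ∈ Finset.Ioi j, ((Real.sign (α k - α j) : ℝ) : ℂ)) *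
            ∏ m : Fin M, ((Real.sign ((β m).im) : ℝ) : ℂ)) *
          vand (gammaVec α β)) ∧
    (vand (gammaVec α β)
        = (∏ j : Fin L, ∏ k ∈ Finset.Ioi j, (((α k - α j : ℝ) : ℝ) : ℂ)) *
          (∏ ℓ : Fin L, ∏ m : Fin M,
            ((‖β m - ((α ℓ : ℝ) : ℂ)‖ : ℝ) : ℂ)^2) *
          (∏ m : Fin M, ∏ n ∈ Finset.Ioi m,
            ((‖β n - β m‖ : ℝ) : ℂ)^2 *
              ((‖β n - (starRingEnd ℂ) (β m)‖ : ℝ) : ℂ)^2) *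
          ∏ m : Fin M, (2 * Complex.I * (((β m).im : ℝ) : ℂ))) := by
  refine ⟨?_, vand_gammaVec α β⟩
  rw [vand_gammaVec]
  simp only [norm_mul, Complex.ofReal_mul, Complex.norm_prod, Complex.ofReal_prod, norm_pow,
    Complex.ofReal_pow, Complex.norm_real, Real.norm_eq_abs, abs_norm, Complex.norm_two,
    Complex.norm_I, Complex.ofReal_ofNat, mul_one]
  simp only [two_mul_ofReal_abs]
  simp only [ofReal_abs_eq_sign_mul, prod_mul_distrib, Fin.prod_const]
  ring

/-- `|Δ(α,β)| = (−i)^M {∏_{j<k} sgn(α_k−α_j) ∏_m sgn(Im β_m)} Δ(α,β)`; equivalently,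
`Δ(α,β) = {∏_{j<k}(α_k−α_j)} ∏_{ℓ,m} |β_m−α_ℓ|² {∏_{m<n} |β_n−β_m|²|β_n−β̄_m|²}
∏_m 2i·Im(β_m)`. -/
theorem abs_vandermonde_eq (N L M : ℕ) (h : L + 2*M = N)
    (α : Fin L → ℝ) (β : Fin M → ℂ) (hβ : ∀ m, (β m).im ≠ 0) :
    (((‖vand (gammaVec α β)‖ : ℝ) : ℂ)
        = (-Complex.I)^M *
          ((∏ j : Fin L, ∏ k ∈ Finset.Ioi j, ((Real.sign (α k - α j) : ℝ) : ℂ)) *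
            ∏ m : Fin M, ((Real.sign ((β m).im) : ℝ) : ℂ)) *
          vand (gammaVec α β)) ∧
    (vand (gammaVec α β)
        = (∏ j : Fin L, ∏ k ∈ Finset.Ioi j, (((α k - α j : ℝ) : ℝ) : ℂ)) *
          (∏ ℓ : Fin L, ∏ m : Fin M,
            ((‖β m - ((α ℓ : ℝ) : ℂ)‖ : ℝ) : ℂ)^2) *
          (∏ m : Fin M, ∏ n ∈ Finset.Ioi m,
            ((‖β n - β m‖ : ℝ) : ℂ)^2 *
              ((‖β n - (starRingEnd ℂ) (β m)‖ : ℝ) : ℂ)^2) *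
          ∏ m : Fin M, (2 * Complex.I * (((β m).im : ℝ) : ℂ))) :=
  abs_vandermonde_eq_general L M α β

end
end
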